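/- With J defined by the Bellman recursion, for every b ∈ {1,…,B} and v ∈ {1,…,V}, the set of minimizers over s ∈ S of the Bellman expression c(s) + h(b) + s·(−r(v) + J(b−1,V)) + (1−s)·(J(b,v−1) if v > 1, else J(b−1,V)) equals the set of minimizers over s ∈ S of c(s) − s·(r(v) + σ(b,v−1)). -/

import Mathlib

/-!
Unrolling the Bellman recursion in `v` gives `J(b, v) = J(b - 1, V) + σ(b, v)` for `v ≥ 1`,
so the continuation value in the Bellman expression is `J(b - 1, V) + σ(b, v - 1)`, also at
`v = 1` where `σ(b, 0) = 0`. Substituting it, the Bellman expression becomes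
`c(s) - s·(r(v) + σ(b, v - 1))` plus a term independent of `s`, hence the same minimizers.
-/

/-- `delta S hS c h r b v` is δ(b,v): δ(b,0) = 0 and
δ(b,v) = h(b) + min_{s ∈ S} (c(s) − s·(r(v) + Σ_{i=0}^{v−1} δ(b,i))). -/
noncomputable def delta (S : Finset ℝ) (hS : S.Nonempty) (c : ℝ → ℝ) (h r : ℕ → ℝ)
    (b : ℕ) : ℕ → ℝ
  | 0 => 0
  | v + 1 => h b + S.inf' hS (fun s =>
      c s - s * (r (v + 1) + ∑ i ∈ (Finset.range (v + 1)).attach, delta S hS c h r b i.1))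
decreasing_by exact Finset.mem_range.mp i.2

/-- `sigma S hS c h r b v` is σ(b,v) = Σ_{i=0}^{v} δ(b,i). -/
noncomputable def sigma (S : Finset ℝ) (hS : S.Nonempty) (c : ℝ → ℝ) (h r : ℕ → ℝ)
    (b v : ℕ) : ℝ :=
  ∑ i ∈ Finset.range (v + 1), delta S hS c h r b i

/-- `Jval S hS c h r V b v` is J(b,v) defined by the Bellman recursion:
J(0,v) = 0 and for b ≥ 1,
J(b,v) = min_{s ∈ S} [c(s) + h(b) + s·(−r(v) + J(b−1,V))
  + (1−s)·(J(b,v−1) if v > 1 else J(b−1,V))]. -/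
noncomputable def Jval (S : Finset ℝ) (hS : S.Nonempty) (c : ℝ → ℝ) (h r : ℕ → ℝ)
    (V : ℕ) : ℕ → ℕ → ℝ
  | 0, _ => 0
  | b + 1, v =>
    S.inf' hS (fun s =>
      c s + h (b + 1) + s * (-(r v) + Jval S hS c h r V b V) +
        (1 - s) * (if _hv : 1 < v then Jval S hS c h r V (b + 1) (v - 1)
                   else Jval S hS c h r V b V))
termination_by b v => (b, v)
decreasing_by
  · exact Prod.Lex.left _ _ (Nat.lt_succ_self b)
  · exact Prod.Lex.right _ (by omega)

variable {S : Finset ℝ} {hS : S.Nonempty} {c : ℝ → ℝ} {h r : ℕ → ℝ}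

theorem Finset.inf'_add_const {ι α : Type*} [LinearOrder α] [Add α] [AddRightMono α]
    {s : Finset ι} (hs : s.Nonempty) (f : ι → α) (a : α) :
    s.inf' hs (fun i => f i + a) = s.inf' hs f + a :=
  (Finset.apply_inf'_eq_inf'_comp hs (· + a) fun x y => (min_add_add_right x y a).symm).symm

theorem sigma_zero (b : ℕ) : sigma S hS c h r b 0 = 0 := by
  simp [sigma, delta]

theorem sigma_succ (b v : ℕ) :
    sigma S hS c h r b (v + 1) = sigma S hS c h r b v + delta S hS c h r b (v + 1) :=
  Finset.sum_range_succ _ _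

theorem delta_succ (b v : ℕ) :
    delta S hS c h r b (v + 1) =
      h b + S.inf' hS (fun s => c s - s * (r (v + 1) + sigma S hS c h r b v)) := by
  rw [delta, sigma, Finset.sum_attach]

theorem bellman_eq_sub_add (x cx hb rv J σ : ℝ) :
    cx + hb + x * (-rv + J) + (1 - x) * (J + σ) = cx - x * (rv + σ) + (hb + J + σ) := by
  ring

theorem Jval_succ_of_continuation {V b v : ℕ} (hv : 1 ≤ v)
    (hcont : (if 1 < v then Jval S hS c h r V (b + 1) (v - 1) else Jval S hS c h r V b V) =
      Jval S hS c h r V b V + sigma S hS c h r (b + 1) (v - 1)) :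
    Jval S hS c h r V (b + 1) v = Jval S hS c h r V b V + sigma S hS c h r (b + 1) v := by
  obtain ⟨k, rfl⟩ : ∃ k, v = k + 1 := ⟨v - 1, by omega⟩
  rw [Jval]
  simp only [dite_eq_ite, hcont, bellman_eq_sub_add, Finset.inf'_add_const]
  rw [Nat.add_sub_cancel, sigma_succ, delta_succ]
  ring

theorem Jval_succ {V b v : ℕ} (hv : 1 ≤ v) :
    Jval S hS c h r V (b + 1) v = Jval S hS c h r V b V + sigma S hS c h r (b + 1) v := by
  induction v, hv using Nat.le_induction with
  | base => exact Jval_succ_of_continuation le_rfl (by simp [sigma_zero])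
  | succ k hk ih =>
    exact Jval_succ_of_continuation (by omega) (by rw [if_pos (by omega), Nat.add_sub_cancel, ih])

/-- At `v ≤ 1` both sides reduce to `Jval V b V`: `v - 1` truncates to `0` and `sigma _ 0 = 0`. -/
theorem Jval_continuation_eq (V b v : ℕ) :
    (if 1 < v then Jval S hS c h r V (b + 1) (v - 1) else Jval S hS c h r V b V) =
      Jval S hS c h r V b V + sigma S hS c h r (b + 1) (v - 1) := by
  split_ifs with hv
  · exact Jval_succ (by omega)
  · rw [show v - 1 = 0 by omega, sigma_zero, add_zero]

open Classical

theorem stmt1_general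
    (S : Finset ℝ) (hS : S.Nonempty) (c : ℝ → ℝ) (h : ℕ → ℝ) (r : ℕ → ℝ) (B V : ℕ) :
    ∀ b, 1 ≤ b → b ≤ B → ∀ v, 1 ≤ v → v ≤ V →
      S.filter (fun s => ∀ s' ∈ S,
          c s + h b + s * (-(r v) + Jval S hS c h r V (b - 1) V) +
            (1 - s) * (if 1 < v then Jval S hS c h r V b (v - 1)
                       else Jval S hS c h r V (b - 1) V) ≤
          c s' + h b + s' * (-(r v) + Jval S hS c h r V (b - 1) V) +
            (1 - s') * (if 1 < v then Jval S hS c h r V b (v - 1)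
                        else Jval S hS c h r V (b - 1) V)) =
      S.filter (fun s => ∀ s' ∈ S,
          c s - s * (r v + sigma S hS c h r b (v - 1)) ≤
          c s' - s' * (r v + sigma S hS c h r b (v - 1))) := by
  intro b hb _ v _ _
  obtain ⟨b, rfl⟩ : ∃ b', b = b' + 1 := ⟨b - 1, by omega⟩
  simp only [Nat.add_sub_cancel, Jval_continuation_eq, bellman_eq_sub_add, add_le_add_iff_right]

/-- The set of minimizers over s ∈ S of the Bellman expression equals the set of
minimizers over s ∈ S of c(s) − s·(r(v) + σ(b,v−1)). -/
theorem stmt1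
    (S : Finset ℝ) (hS : S.Nonempty) (hS01 : ∀ s ∈ S, s ∈ Set.Icc (0 : ℝ) 1)
    (c : ℝ → ℝ) (hc0 : ∀ s ∈ S, 0 ≤ c s)
    (hcmono : ∀ s ∈ S, ∀ s' ∈ S, s ≤ s' → c s ≤ c s')
    (h : ℕ → ℝ) (hh0 : ∀ b, 0 ≤ h b) (hhmono : Monotone h)
    (r : ℕ → ℝ) (hrmono : Monotone r) (hr0 : r 0 = 0) (hrpos : ∀ v, 1 ≤ v → 0 < r v)
    (B V : ℕ) (hB : 0 < B) (hV : 0 < V)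
    :
    ∀ b, 1 ≤ b → b ≤ B → ∀ v, 1 ≤ v → v ≤ V →
      S.filter (fun s => ∀ s' ∈ S,
          c s + h b + s * (-(r v) + Jval S hS c h r V (b - 1) V) +
            (1 - s) * (if 1 < v then Jval S hS c h r V b (v - 1)
                       else Jval S hS c h r V (b - 1) V) ≤
          c s' + h b + s' * (-(r v) + Jval S hS c h r V (b - 1) V) +
            (1 - s') * (if 1 < v then Jval S hS c h r V b (v - 1)
                        else Jval S hS c h r V (b - 1) V)) =
      S.filter (fun s => ∀ s' ∈ S,
          c s - s * (r v + sigma S hS c h r b (v - 1)) ≤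
          c s' - s' * (r v + sigma S hS c h r b (v - 1))) :=
  stmt1_general S hS c h r B V
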